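/- For every a ∈ F_q*, the Hamming weight of the vector c_3(a) = (tr(a·(b+γ_0)^{-1}), ..., tr(a·(b+γ_{q/2−1})^{-1}), tr(a·(b+γ_0)^{-1}), ..., tr(a·(b+γ_{q/2−1})^{-1})) ∈ F_2^{q} equals (q + 1 + K(a))/2. -/
import Mathlib


open Finset

/-- The trace map `tr : F_q → F_2 ⊆ F_q`, `tr x = x + x² + ⋯ + x^(2^(r-1))`. -/
def trF {F : Type*} [Field F] (r : ℕ) (x : F) : F :=
  ∑ i ∈ Finset.range r, x ^ (2 ^ i)

/-- The trace map with values in `F_2 = ZMod 2` (the value of `trF` is always `0` or `1`). -/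
def tr2 {F : Type*} [Field F] [DecidableEq F] (r : ℕ) (x : F) : ZMod 2 :=
  if trF r x = 0 then 0 else 1

/-- The canonical additive character `λ(x) = (-1)^(tr x) ∈ ℤ` of `F_q`. -/
def lamF {F : Type*} [Field F] [DecidableEq F] (r : ℕ) (x : F) : ℤ :=
  if trF r x = 0 then 1 else -1

/-- The Kloosterman sum `K(a) = ∑_{α ∈ F_q*} λ(α + a·α⁻¹)`. -/
def Kloos {F : Type*} [Field F] [Fintype F] [DecidableEq F] (r : ℕ) (a : F) : ℤ :=
  ∑ α ∈ Finset.univ.filter (fun α : F => α ≠ 0), lamF r (α + a * α⁻¹)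

/-- The Hamming weight of a vector over `F_2`: the number of nonzero coordinates. -/
def wt {n : ℕ} (u : Fin n → ZMod 2) : ℕ :=
  (Finset.univ.filter (fun l => u l ≠ 0)).card

/-- The vector `(g_1⁻¹, …, g_m⁻¹, g_1⁻¹, …, g_m⁻¹) ∈ F_q^n`, where `n = m + m`. -/
def doubledInvVec {F : Type*} [Field F] {m n : ℕ} (g : Fin m → F) (hN : n = m + m) :
    Fin n → F :=
  fun l => (Fin.append g g (Fin.cast hN l))⁻¹

/-- The codeword map `a ↦ (tr(a·v_1), …, tr(a·v_n)) ∈ F_2^n`. -/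
def cw {F : Type*} [Field F] [DecidableEq F] (r : ℕ) {n : ℕ} (v : Fin n → F) (a : F) :
    Fin n → ZMod 2 :=
  fun l => tr2 r (a * v l)

section helpers
variable {F : Type*} [Field F] [Fintype F] [DecidableEq F] {r : ℕ}

lemma char2 (hr : 0 < r) (hF : Fintype.card F = 2 ^ r) : CharP F 2 := by
  have h2 : (2 : F) = 0 := by
    have := FiniteField.cast_card_eq_zero F
    rw [hF] at this
    push_cast at this
    exact pow_eq_zero_iff hr.ne' |>.mp this
  have hrc : ringChar F = 2 := CharP.ringChar_of_prime_eq_zero Nat.prime_two h2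
  rw [← hrc]; exact ringChar.charP F

lemma frob (hF : Fintype.card F = 2 ^ r) (x : F) : x ^ (2 ^ r) = x := by
  rw [← hF]; exact FiniteField.pow_card x

lemma tr_shift (hr : 0 < r) (hF : Fintype.card F = 2 ^ r) (x : F) :
    ∑ i ∈ Finset.range r, x ^ (2 ^ (i + 1)) = trF r x := by
  haveI := char2 hr hF
  have h : ∑ i ∈ Finset.range (r + 1), x ^ (2 ^ i)
      = (∑ i ∈ Finset.range r, x ^ (2 ^ (i + 1))) + x ^ (2 ^ 0) :=
    Finset.sum_range_succ' _ r
  have h2 : ∑ i ∈ Finset.range (r + 1), x ^ (2 ^ i)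
      = trF r x + x ^ (2 ^ r) := Finset.sum_range_succ _ r
  rw [h2, frob hF, pow_zero, pow_one] at h
  exact add_right_cancel h.symm

lemma trF_sq (hr : 0 < r) (hF : Fintype.card F = 2 ^ r) (x : F) :
    trF r x * trF r x = trF r x := by
  haveI := char2 hr hF
  haveI := Fact.mk Nat.prime_two
  have h1 : trF r x ^ 2 = ∑ i ∈ Finset.range r, x ^ (2 ^ (i + 1)) := by
    rw [trF, sum_pow_char]
    refine Finset.sum_congr rfl fun i _ => ?_
    rw [← pow_mul, pow_succ]
  rw [← sq]
  exact h1.trans (tr_shift hr hF x)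

lemma trF_val (hr : 0 < r) (hF : Fintype.card F = 2 ^ r) (x : F) :
    trF r x = 0 ∨ trF r x = 1 := by
  have h := trF_sq hr hF x
  have : trF r x * (trF r x - 1) = 0 := by ring_nf; linear_combination h
  rcases mul_eq_zero.mp this with h | h
  · exact Or.inl h
  · exact Or.inr (by linear_combination h)

lemma trF_add (hr : 0 < r) (hF : Fintype.card F = 2 ^ r) (x y : F) :
    trF r (x + y) = trF r x + trF r y := by
  haveI := char2 hr hF
  rw [trF, trF, trF, ← Finset.sum_add_distrib]
  haveI := Fact.mk Nat.prime_two
  exact Finset.sum_congr rfl fun i _ => add_pow_char_pow x y 2 i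

lemma trF_AS (hr : 0 < r) (hF : Fintype.card F = 2 ^ r) (α : F) :
    trF r (α ^ 2 + α) = 0 := by
  haveI := char2 hr hF
  rw [trF_add hr hF]
  have h : trF r (α ^ 2) = trF r α := by
    rw [trF, ← tr_shift hr hF α]
    refine Finset.sum_congr rfl fun i _ => ?_
    rw [← pow_mul, pow_succ, mul_comm (2 ^ i) 2, pow_mul]
  rw [h, CharTwo.add_self_eq_zero]

end helpers

section ker
variable {F : Type*} [Field F] [Fintype F] [DecidableEq F] {r : ℕ}

lemma ker_eq (hr : 0 < r) (hF : Fintype.card F = 2 ^ r)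
    (γ : Fin (2 ^ (r - 1)) → F) (hγinj : Function.Injective γ)
    (hγran : Set.range γ = {β : F | ∃ α : F, β = α ^ 2 + α}) :
    Finset.univ.filter (fun x : F => trF r x = 0) = Finset.image γ Finset.univ := by
  set P : Polynomial F := ∑ i ∈ Finset.range r, Polynomial.X ^ (2 ^ i) with hP
  have hev : ∀ x : F, P.eval x = trF r x := by
    intro x
    rw [hP, Polynomial.eval_finset_sum, trF]
    simp
  have hP0 : P ≠ 0 := by
    intro h
    have hc : P.coeff 1 = 1 := by
      rw [hP, Polynomial.finset_sum_coeff]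
      simp only [Polynomial.coeff_X_pow]
      have : ∀ i : ℕ, (1 = 2 ^ i) ↔ (i = 0) := by
        intro i
        constructor
        · intro h'
          by_contra hi
          have : 1 < 2 ^ i := Nat.one_lt_two_pow_iff.mpr hi
          omega
        · rintro rfl; simp
      simp only [this]
      rw [Finset.sum_ite_eq' (Finset.range r) 0 (fun _ => (1 : F))]
      simp [hr]
    rw [h] at hc
    simp at hc
  have hdeg : P.natDegree ≤ 2 ^ (r - 1) := by
    refine Polynomial.natDegree_sum_le_of_forall_le _ _ fun i hi => ?_
    rw [Polynomial.natDegree_X_pow]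
    exact Nat.pow_le_pow_right (by norm_num) (by
      have := Finset.mem_range.mp hi; omega)
  have hsub : Finset.univ.filter (fun x : F => trF r x = 0) ⊆ P.roots.toFinset := by
    intro x hx
    rw [Multiset.mem_toFinset, Polynomial.mem_roots hP0, Polynomial.IsRoot, hev]
    exact (Finset.mem_filter.mp hx).2
  have hcard1 : (Finset.univ.filter (fun x : F => trF r x = 0)).card ≤ 2 ^ (r - 1) :=
    le_trans (Finset.card_le_card hsub)
      (le_trans (Multiset.toFinset_card_le _) (le_trans (Polynomial.card_roots' P) hdeg))
  have hsub2 : Finset.image γ Finset.univ ⊆ Finset.univ.filter (fun x : F => trF r x = 0) := by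
    intro x hx
    obtain ⟨i, _, rfl⟩ := Finset.mem_image.mp hx
    have : γ i ∈ Set.range γ := ⟨i, rfl⟩
    rw [hγran] at this
    obtain ⟨α, hα⟩ := this
    rw [Finset.mem_filter]
    exact ⟨Finset.mem_univ _, by rw [hα]; exact trF_AS hr hF α⟩
  have hcard2 : (Finset.image γ Finset.univ).card = 2 ^ (r - 1) := by
    rw [Finset.card_image_of_injective _ hγinj, Finset.card_univ, Fintype.card_fin]
  exact (Finset.eq_of_subset_of_card_le hsub2 (by rw [hcard2]; exact hcard1)).symm

end ker

section lam
variable {F : Type*} [Field F] [Fintype F] [DecidableEq F] {r : ℕ}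

lemma trF_zero : trF r (0 : F) = 0 := by
  simp [trF]

lemma lamF_add (hr : 0 < r) (hF : Fintype.card F = 2 ^ r) (x y : F) :
    lamF r (x + y) = lamF r x * lamF r y := by
  haveI := char2 hr hF
  have h11 : (1 : F) + 1 = 0 := CharTwo.add_self_eq_zero 1
  unfold lamF
  rw [trF_add hr hF]
  rcases trF_val hr hF x with h | h <;> rcases trF_val hr hF y with h' | h' <;>
    simp [h, h', h11]

lemma sum_lamF (hN : 2 ^ r = 2 ^ (r - 1) + 2 ^ (r - 1)) (hF : Fintype.card F = 2 ^ r)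
    (hc : (Finset.univ.filter (fun x : F => trF r x = 0)).card = 2 ^ (r - 1)) :
    ∑ x : F, lamF r x = 0 := by
  rw [← Finset.sum_filter_add_sum_filter_not Finset.univ (fun x : F => trF r x = 0)]
  have hcn : (Finset.univ.filter (fun x : F => ¬ trF r x = 0)).card = 2 ^ (r - 1) := by
    have := Finset.card_filter_add_card_filter_not (s := (Finset.univ : Finset F))
      (p := fun x : F => trF r x = 0)
    rw [hc, Finset.card_univ, hF] at this
    omega
  have h1 : ∑ x ∈ Finset.univ.filter (fun x : F => trF r x = 0), lamF r x
      = (2 ^ (r - 1) : ℤ) := by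
    rw [Finset.sum_congr rfl (fun x hx => show lamF r x = 1 by
      simp [lamF, (Finset.mem_filter.mp hx).2])]
    rw [Finset.sum_const, hc]
    simp
  have h2 : ∑ x ∈ Finset.univ.filter (fun x : F => ¬ trF r x = 0), lamF r x
      = -(2 ^ (r - 1) : ℤ) := by
    rw [Finset.sum_congr rfl (fun x hx => show lamF r x = -1 by
      simp [lamF, (Finset.mem_filter.mp hx).2])]
    rw [Finset.sum_const, hcn]
    simp
  rw [h1, h2]
  ring

end lam

/-- For every `a ∈ F_q*`, the Hamming weight of
`c_3(a) = (tr(a·(b+γ_0)⁻¹), …, tr(a·(b+γ_{q/2−1})⁻¹), tr(a·(b+γ_0)⁻¹), …,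
tr(a·(b+γ_{q/2−1})⁻¹)) ∈ F_2^q` equals `(q + 1 + K(a))/2`, where `b ∈ F_q \ Θ(F_q)` and
`γ_0 = 0, γ_1, …, γ_{q/2−1}` enumerate the elements of `Θ(F_q) = {α² + α : α ∈ F_q}`. -/

theorem weight_c3 {F : Type*} [Field F] [Fintype F] [DecidableEq F]
    (r : ℕ) (hr : 0 < r) (hF : Fintype.card F = 2 ^ r)
    (b : F) (hb : ∀ α : F, α ^ 2 + α ≠ b)
    (γ : Fin (2 ^ (r - 1)) → F) (hγinj : Function.Injective γ)
    (hγran : Set.range γ = {β : F | ∃ α : F, β = α ^ 2 + α})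
    (hN : 2 ^ r = 2 ^ (r - 1) + 2 ^ (r - 1))
    (a : F) (ha : a ≠ 0) :
    (wt (cw r (doubledInvVec (fun i => b + γ i) hN) a) : ℚ)
      = ((2 ^ r : ℚ) + 1 + (Kloos r a : ℚ)) / 2 := by
  haveI := char2 hr hF
  classical
  have hker := ker_eq hr hF γ hγinj hγran
  have hc : (Finset.univ.filter (fun x : F => trF r x = 0)).card = 2 ^ (r - 1) := by
    rw [hker, Finset.card_image_of_injective _ hγinj, Finset.card_univ, Fintype.card_fin]
  have hkmem : ∀ x : F, trF r x = 0 ↔ ∃ i, γ i = x := by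
    intro x
    constructor
    · intro h
      have hx : x ∈ Finset.univ.filter (fun x : F => trF r x = 0) :=
        Finset.mem_filter.mpr ⟨Finset.mem_univ _, h⟩
      rw [hker] at hx
      obtain ⟨i, _, hi⟩ := Finset.mem_image.mp hx
      exact ⟨i, hi⟩
    · rintro ⟨i, rfl⟩
      have : γ i ∈ Set.range γ := ⟨i, rfl⟩
      rw [hγran] at this
      obtain ⟨α, hα⟩ := this
      rw [hα]
      exact trF_AS hr hF α
  have hb1 : trF r b = 1 := by
    rcases trF_val hr hF b with h | h
    · exfalso
      obtain ⟨i, hi⟩ := (hkmem b).mp h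
      have : γ i ∈ Set.range γ := ⟨i, rfl⟩
      rw [hγran] at this
      obtain ⟨α, hα⟩ := this
      exact hb α (by rw [← hα, hi])
    · exact h
  set g : Fin (2 ^ (r - 1)) → F := fun i => b + γ i with hg
  set S : Finset (Fin (2 ^ (r - 1))) :=
    Finset.univ.filter (fun i => trF r (a * (g i)⁻¹) ≠ 0) with hS
  set T : Finset F :=
    Finset.univ.filter (fun x : F => trF r x ≠ 0 ∧ trF r (a * x⁻¹) ≠ 0) with hT
  -- Step A : wt = 2 * T.card
  have hginj : Function.Injective g := fun i j hij => hγinj (by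
    have : b + γ i = b + γ j := hij
    exact add_left_cancel this)
  have hTim : T = Finset.image g S := by
    ext x
    simp only [hT, hS, Finset.mem_filter, Finset.mem_image, Finset.mem_univ, true_and]
    constructor
    · rintro ⟨h1, h2⟩
      have hx1 : trF r x = 1 := (trF_val hr hF x).resolve_left h1
      have : trF r (x + b) = 0 := by
        rw [trF_add hr hF, hx1, hb1, CharTwo.add_self_eq_zero]
      obtain ⟨i, hi⟩ := (hkmem _).mp this
      have hgi : g i = x := by
        rw [hg]
        simp only
        rw [hi]
        linear_combination CharTwo.add_self_eq_zero b
      exact ⟨i, by rw [hgi]; exact h2, hgi⟩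
    · rintro ⟨i, hi, rfl⟩
      have hγ0 : trF r (γ i) = 0 := (hkmem _).mpr ⟨i, rfl⟩
      refine ⟨?_, hi⟩
      rw [hg]
      simp only
      rw [trF_add hr hF, hb1, hγ0, add_zero]
      exact one_ne_zero
  have hTS : T.card = S.card := by
    rw [hTim, Finset.card_image_of_injective _ hginj]
  have hwt : wt (cw r (doubledInvVec g hN) a) = 2 * T.card := by
    have hiff : ∀ z : F, ((if trF r z = 0 then (0 : ZMod 2) else 1) ≠ 0) ↔ trF r z ≠ 0 := by
      intro z
      by_cases h : trF r z = 0 <;> simp [h]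
    rw [wt]
    have step1 : (Finset.univ.filter
          (fun l : Fin (2 ^ r) => cw r (doubledInvVec g hN) a l ≠ 0)).card
        = (Finset.univ.filter
          (fun j : Fin (2 ^ (r - 1) + 2 ^ (r - 1)) =>
            trF r (a * (Fin.append g g j)⁻¹) ≠ 0)).card := by
      refine Finset.card_bij' (fun l _ => Fin.cast hN l) (fun j _ => Fin.cast hN.symm j)
        ?_ ?_ ?_ ?_
      · intro l hl
        simp only [Finset.mem_filter, Finset.mem_univ, true_and] at hl ⊢
        rw [cw, doubledInvVec, tr2] at hl
        exact (hiff _).mp hl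
      · intro j hj
        simp only [Finset.mem_filter, Finset.mem_univ, true_and] at hj ⊢
        rw [cw, doubledInvVec, tr2]
        refine (hiff _).mpr ?_
        simpa using hj
      · intro l _; rfl
      · intro j _; rfl
    rw [step1, Finset.card_filter]
    rw [Fin.sum_univ_add]
    have e1 : ∀ i : Fin (2 ^ (r - 1)),
        (if trF r (a * (Fin.append g g (Fin.castAdd _ i))⁻¹) ≠ 0 then 1 else 0)
        = (if trF r (a * (g i)⁻¹) ≠ 0 then 1 else 0) := by
      intro i; rw [Fin.append_left]
    have e2 : ∀ i : Fin (2 ^ (r - 1)),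
        (if trF r (a * (Fin.append g g (Fin.natAdd _ i))⁻¹) ≠ 0 then 1 else 0)
        = (if trF r (a * (g i)⁻¹) ≠ 0 then 1 else 0) := by
      intro i; rw [Fin.append_right]
    rw [Finset.sum_congr rfl (fun i _ => e1 i), Finset.sum_congr rfl (fun i _ => e2 i),
      ← Finset.card_filter, hTS, hS]
    ring
  -- Step B : 4 * T.card = 2^r + 1 + Kloos r a  (in ℤ)
  have trF0 : trF r (0 : F) = 0 := trF_zero
  have key : (4 : ℤ) * T.card = 2 ^ r + 1 + Kloos r a := by
    have e1 : ∑ x : F, (1 - lamF r x) * (1 - lamF r (a * x⁻¹)) = (4 : ℤ) * T.card := by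
      have hterm : ∀ x : F, (1 - lamF r x) * (1 - lamF r (a * x⁻¹))
          = if trF r x ≠ 0 ∧ trF r (a * x⁻¹) ≠ 0 then (4 : ℤ) else 0 := by
        intro x
        by_cases h1 : trF r x = 0 <;> by_cases h2 : trF r (a * x⁻¹) = 0 <;>
          simp [lamF, h1, h2] <;> ring
      rw [Finset.sum_congr rfl (fun x _ => hterm x), Finset.sum_ite, Finset.sum_const,
        Finset.sum_const_zero, add_zero, hT]
      simp [mul_comm]
    have e2 : ∑ x : F, (1 - lamF r x) * (1 - lamF r (a * x⁻¹))
        = (2 ^ r : ℤ) + 1 + Kloos r a := by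
      have expand : ∀ x : F, (1 - lamF r x) * (1 - lamF r (a * x⁻¹))
          = 1 - lamF r x - lamF r (a * x⁻¹) + lamF r x * lamF r (a * x⁻¹) := by
        intro x; ring
      rw [Finset.sum_congr rfl (fun x _ => expand x)]
      rw [Finset.sum_add_distrib, Finset.sum_sub_distrib, Finset.sum_sub_distrib]
      have s0 : ∑ _x : F, (1 : ℤ) = 2 ^ r := by
        rw [Finset.sum_const, Finset.card_univ, hF]; simp
      have s1 : ∑ x : F, lamF r x = 0 := sum_lamF hN hF hc
      have s2 : ∑ x : F, lamF r (a * x⁻¹) = 0 := by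
        have hinv : Function.Involutive (fun x : F => a * x⁻¹) := by
          intro x
          by_cases hx : x = 0
          · simp [hx]
          · field_simp
        rw [← s1]
        exact Fintype.sum_bijective _ hinv.bijective _ _ (fun x => rfl)
      have s3 : ∑ x : F, lamF r x * lamF r (a * x⁻¹) = 1 + Kloos r a := by
        have hmul : ∀ x : F, lamF r x * lamF r (a * x⁻¹) = lamF r (x + a * x⁻¹) := by
          intro x; exact (lamF_add hr hF x (a * x⁻¹)).symm
        rw [Finset.sum_congr rfl (fun x _ => hmul x)]
        rw [← Finset.sum_filter_add_sum_filter_not Finset.univ (fun x : F => x ≠ 0)]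
        have hnot : Finset.univ.filter (fun x : F => ¬ x ≠ 0) = {0} := by
          ext x; simp
        rw [hnot, Finset.sum_singleton]
        have : lamF r ((0 : F) + a * (0 : F)⁻¹) = 1 := by
          simp [lamF, trF0]
        rw [this, Kloos]
        ring
      rw [s0, s1, s2, s3]
      ring
    rw [← e1, e2]
  -- conclude
  rw [hwt]
  have keyQ : (4 : ℚ) * T.card = 2 ^ r + 1 + (Kloos r a : ℚ) := by
    exact_mod_cast key
  push_cast
  linarith
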